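/- arXiv:2102.03486 — 8 statements merged into one kernel-verified Lean document; each statement's English description precedes it below -/
import Mathlib

section
/- (Stanley–Elder–Fine theorem) For every positive integer n and every k with 1 ≤ k ≤ n, the total number of parts equal to k over all partitions of n equals the total number of parts repeated at least k times over all partitions of n; that is, F_k(n) = G_k(n). -/
open Finset Multiset

/-- Move operation: remove `a` copies of `b`, add `b` copies of `a`. -/
def mvMs (a b : ℕ) (s : Multiset ℕ) : Multiset ℕ :=
  s - Multiset.replicate a b + Multiset.replicate b a

lemma rep_le_of_count (a b : ℕ) (s : Multiset ℕ) (h : a ≤ s.count b) :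
    Multiset.replicate a b ≤ s := by
  rw [Multiset.le_iff_count]
  intro x
  rw [Multiset.count_replicate]
  split
  · next hx => subst hx; exact h
  · exact Nat.zero_le _

lemma mv_sum (a b : ℕ) (s : Multiset ℕ) (h : a ≤ s.count b) :
    (mvMs a b s).sum = s.sum := by
  have hle := rep_le_of_count a b s h
  have hs : (s - Multiset.replicate a b).sum + (Multiset.replicate a b).sum = s.sum := by
    rw [← Multiset.sum_add, tsub_add_cancel_of_le hle]
  rw [mvMs, Multiset.sum_add]
  simp [Multiset.sum_replicate] at hs ⊢
  rw [Nat.mul_comm b a]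
  omega

lemma mv_count (a b : ℕ) (s : Multiset ℕ) :
    b ≤ (mvMs a b s).count a := by
  simp [mvMs, Multiset.count_add, Multiset.count_replicate]

lemma mv_mv (a b : ℕ) (s : Multiset ℕ) (h : a ≤ s.count b) :
    mvMs b a (mvMs a b s) = s := by
  unfold mvMs
  rw [add_tsub_cancel_right, tsub_add_cancel_of_le (rep_le_of_count a b s h)]

lemma mv_pos (a b : ℕ) (ha : 0 < a) (s : Multiset ℕ) (hs : ∀ x ∈ s, 0 < x) :
    ∀ x ∈ mvMs a b s, 0 < x := by
  intro x hx
  rw [mvMs, Multiset.mem_add] at hx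
  rcases hx with hx | hx
  · exact hs x (Multiset.mem_of_le (tsub_le_self) hx)
  · rw [Multiset.eq_of_mem_replicate hx]; exact ha

/-- The symmetry lemma: # partitions of n with ≥ a copies of b = # with ≥ b copies of a. -/
lemma C_symm (n a b : ℕ) (ha : 0 < a) (hb : 0 < b) :
    (Finset.univ.filter fun P : Nat.Partition n => a ≤ P.parts.count b).card =
    (Finset.univ.filter fun P : Nat.Partition n => b ≤ P.parts.count a).card := by
  apply Finset.card_bij'
    (i := fun P hP => ⟨mvMs a b P.parts,
      fun {x} hx => mv_pos a b ha P.parts (fun y hy => P.parts_pos hy) x hx,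
      by
        rw [mv_sum a b P.parts (by simpa using (Finset.mem_filter.mp hP).2)]
        exact P.parts_sum⟩)
    (j := fun P hP => ⟨mvMs b a P.parts,
      fun {x} hx => mv_pos b a hb P.parts (fun y hy => P.parts_pos hy) x hx,
      by
        rw [mv_sum b a P.parts (by simpa using (Finset.mem_filter.mp hP).2)]
        exact P.parts_sum⟩)
  case hi =>
    intro P hP
    simp only [Finset.mem_filter, Finset.mem_univ, true_and]
    exact mv_count a b P.parts
  case hj =>
    intro P hP
    simp only [Finset.mem_filter, Finset.mem_univ, true_and]
    exact mv_count b a P.parts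
  case left_inv =>
    intro P hP
    apply Nat.Partition.ext
    exact mv_mv a b P.parts (by simpa using (Finset.mem_filter.mp hP).2)
  case right_inv =>
    intro P hP
    apply Nat.Partition.ext
    exact mv_mv b a P.parts (by simpa using (Finset.mem_filter.mp hP).2)

lemma card_le_sum_ms (s : Multiset ℕ) (hs : ∀ x ∈ s, 0 < x) :
    Multiset.card s ≤ s.sum := by
  induction s using Multiset.induction with
  | empty => simp
  | cons x t ih =>
    simp only [Multiset.card_cons, Multiset.sum_cons]
    have h1 : 0 < x := hs x (Multiset.mem_cons_self x t)
    have h2 := ih (fun y hy => hs y (Multiset.mem_cons_of_mem hy))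
    omega

lemma sum_ind {α : Type*} (s : Finset α) (p : α → Prop) [DecidablePred p] :
    (∑ x ∈ s, if p x then (1:ℕ) else 0) = (s.filter p).card := by
  simp [Finset.sum_ite, Finset.sum_const]

lemma count_if_sum (n c : ℕ) (hc : c ≤ n) :
    ∑ j ∈ Finset.Icc 1 n, (if j ≤ c then 1 else 0) = c := by
  rw [sum_ind]
  have : (Finset.Icc 1 n).filter (fun j => j ≤ c) = Finset.Icc 1 c := by
    ext j
    simp only [Finset.mem_filter, Finset.mem_Icc]
    omega
  simp [this]


/-- `F k n`: the total number of parts equal to `k` over all partitions of `n`. -/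
def partF (k n : ℕ) : ℕ := ∑ lam : Nat.Partition n, lam.parts.count k

/-- `G k n`: the total number of distinct values occurring as a part with multiplicity
at least `k`, summed over all partitions of `n`. -/
def partG (k n : ℕ) : ℕ :=
  ∑ lam : Nat.Partition n,
    (lam.parts.toFinset.filter fun m => k ≤ lam.parts.count m).card

/-- Stanley–Elder–Fine theorem. -/
theorem stanley_elder_fine (n k : ℕ) (hn : 0 < n) (hk : 1 ≤ k) (hkn : k ≤ n) :
    partF k n = partG k n := by
  have hF : partF k n = ∑ lam : Nat.Partition n, ∑ j ∈ Finset.Icc 1 n,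
      (if j ≤ lam.parts.count k then 1 else 0) := by
    unfold partF
    refine Finset.sum_congr rfl fun lam _ => ?_
    rw [count_if_sum]
    calc lam.parts.count k ≤ Multiset.card lam.parts := Multiset.count_le_card _ _
      _ ≤ lam.parts.sum := card_le_sum_ms _ (fun x hx => lam.parts_pos hx)
      _ = n := lam.parts_sum
  have hG : partG k n = ∑ lam : Nat.Partition n, ∑ m ∈ Finset.Icc 1 n,
      (if k ≤ lam.parts.count m then 1 else 0) := by
    unfold partG
    refine Finset.sum_congr rfl fun lam _ => ?_
    rw [sum_ind]
    congr 1
    ext m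
    simp only [Finset.mem_filter, Multiset.mem_toFinset, Finset.mem_Icc]
    constructor
    · rintro ⟨hm, hcnt⟩
      refine ⟨⟨lam.parts_pos hm, ?_⟩, hcnt⟩
      have := Multiset.single_le_sum (fun x _ => Nat.zero_le x) m hm
      rw [lam.parts_sum] at this
      exact this
    · rintro ⟨_, hcnt⟩
      refine ⟨?_, hcnt⟩
      rw [← Multiset.count_pos]
      omega
  rw [hF, hG, Finset.sum_comm, Finset.sum_comm (s := Finset.univ)]
  refine Finset.sum_congr rfl fun j hj => ?_
  rw [Finset.mem_Icc] at hj
  have h1 : ∑ lam : Nat.Partition n, (if j ≤ lam.parts.count k then (1:ℕ) else 0)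
      = (Finset.univ.filter fun P : Nat.Partition n => j ≤ P.parts.count k).card := by
    rw [sum_ind]
  have h2 : ∑ lam : Nat.Partition n, (if k ≤ lam.parts.count j then (1:ℕ) else 0)
      = (Finset.univ.filter fun P : Nat.Partition n => k ≤ P.parts.count j).card := by
    rw [sum_ind]
  rw [h1, h2]
  exact C_symm n j k hj.1 hk
end

section
/- For every positive integer n and every positive integer k, the total number of parts repeated at least k times over all partitions of n satisfies G_k(n) = Σ_{j=1}^{⌊n/k⌋} p(n − jk). -/
/-- `p n`: the number of partitions of `n` (with `p 0 = 1`). -/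
def partp (n : ℕ) : ℕ := Fintype.card (Nat.Partition n)

open Finset Multiset

/-- Remove `k` copies of `m` from a partition of `n` containing at least `k` copies of `m`. -/
def subPart {n : ℕ} (m k : ℕ) (lam : Nat.Partition n) (h : k ≤ lam.parts.count m) :
    Nat.Partition (n - m * k) where
  parts := lam.parts - Multiset.replicate k m
  parts_pos := fun {a} ha => lam.parts_pos (Multiset.mem_of_le (Multiset.sub_le_self _ _) ha)
  parts_sum := by
    have hle : Multiset.replicate k m ≤ lam.parts := Multiset.le_count_iff_replicate_le.mp h
    have h2 : (lam.parts - Multiset.replicate k m) + Multiset.replicate k m = lam.parts :=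
      tsub_add_cancel_of_le hle
    have h3 := congrArg Multiset.sum h2
    rw [Multiset.sum_add, Multiset.sum_replicate, smul_eq_mul, lam.parts_sum] at h3
    have hc : k * m = m * k := Nat.mul_comm k m
    omega

/-- Add `k` copies of `m` to a partition of `n - m * k`. -/
def addPart {n : ℕ} (m k : ℕ) (hm : 0 < m) (hmk : m * k ≤ n)
    (mu : Nat.Partition (n - m * k)) : Nat.Partition n where
  parts := mu.parts + Multiset.replicate k m
  parts_pos := fun {a} ha => by
    rcases Multiset.mem_add.mp ha with h | h
    · exact mu.parts_pos h
    · rw [Multiset.eq_of_mem_replicate h]; exact hm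
  parts_sum := by
    rw [Multiset.sum_add, Multiset.sum_replicate, smul_eq_mul, mu.parts_sum]
    have hc : k * m = m * k := Nat.mul_comm k m
    omega

lemma count_partitions (n m k : ℕ) (hm : 0 < m) (hmk : m * k ≤ n) :
    (Finset.univ.filter fun lam : Nat.Partition n => k ≤ lam.parts.count m).card
      = partp (n - m * k) := by
  rw [partp, ← Finset.card_univ]
  refine Finset.card_bij' (fun lam hlam => subPart m k lam (by simpa using hlam))
    (fun mu _ => addPart m k hm hmk mu) ?_ ?_ ?_ ?_
  · intro lam hlam
    exact Finset.mem_univ _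
  · intro mu _
    simp only [Finset.mem_filter, Finset.mem_univ, true_and, addPart]
    rw [Multiset.count_add, Multiset.count_replicate_self]
    omega
  · intro lam hlam
    ext1
    simp only [addPart, subPart]
    exact tsub_add_cancel_of_le (Multiset.le_count_iff_replicate_le.mp (by simpa using hlam))
  · intro mu _
    ext1
    simp only [addPart, subPart]
    exact add_tsub_cancel_right _ _


theorem partG_eq_sum_partp (n k : ℕ) (hn : 0 < n) (hk : 0 < k) :
    partG k n = ∑ j ∈ Finset.Icc 1 (n / k), partp (n - j * k) := by
  have hfilt : ∀ lam : Nat.Partition n,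
      (lam.parts.toFinset.filter fun m => k ≤ lam.parts.count m)
        = ((Finset.Icc 1 n).filter fun m => k ≤ lam.parts.count m) := by
    intro lam
    ext m
    simp only [Finset.mem_filter, Multiset.mem_toFinset, Finset.mem_Icc]
    constructor
    · rintro ⟨hmem, hc⟩
      refine ⟨⟨lam.parts_pos hmem, ?_⟩, hc⟩
      calc m ≤ lam.parts.sum := Multiset.single_le_sum (fun x _ => Nat.zero_le x) _ hmem
        _ = n := lam.parts_sum
    · rintro ⟨_, hc⟩
      refine ⟨Multiset.count_pos.mp (by omega), hc⟩
  have h1 : partG k n = ∑ m ∈ Finset.Icc 1 n,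
      (Finset.univ.filter fun lam : Nat.Partition n => k ≤ lam.parts.count m).card := by
    rw [partG]
    simp_rw [hfilt, Finset.card_filter]
    rw [Finset.sum_comm]
  rw [h1]
  have h2 : ∀ m ∈ Finset.Icc 1 n,
      (Finset.univ.filter fun lam : Nat.Partition n => k ≤ lam.parts.count m).card
        = if m * k ≤ n then partp (n - m * k) else 0 := by
    intro m hm
    rw [Finset.mem_Icc] at hm
    split_ifs with h
    · exact count_partitions n m k (by omega) h
    · rw [Finset.card_eq_zero, Finset.filter_eq_empty_iff]
      intro lam _
      intro hc
      have hle : Multiset.replicate k m ≤ lam.parts := Multiset.le_count_iff_replicate_le.mp hc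
      have h2 : (lam.parts - Multiset.replicate k m) + Multiset.replicate k m = lam.parts :=
        tsub_add_cancel_of_le hle
      have h3 := congrArg Multiset.sum h2
      rw [Multiset.sum_add, Multiset.sum_replicate, smul_eq_mul, lam.parts_sum] at h3
      have hc : k * m = m * k := Nat.mul_comm k m
      omega
  rw [Finset.sum_congr rfl h2, Finset.sum_ite, Finset.sum_const, smul_zero, add_zero]
  apply Finset.sum_congr _ (fun _ _ => rfl)
  ext m
  simp only [Finset.mem_filter, Finset.mem_Icc]
  constructor
  · rintro ⟨⟨h1', h2'⟩, h3'⟩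
    exact ⟨h1', (Nat.le_div_iff_mul_le hk).mpr h3'⟩
  · rintro ⟨h1', h2'⟩
    have h3' := (Nat.le_div_iff_mul_le hk).mp h2'
    exact ⟨⟨h1', le_trans h2' (Nat.div_le_self _ _)⟩, h3'⟩
end

section
/- (Stanley–Elder–Fine theorem for b-colored partitions) For every positive integer n and every k with 1 ≤ k ≤ n, F_k(n) = G_k(n): the total number of parts with first coordinate k over all b-colored partitions of n equals the total number of colored parts repeated at least k times over all b-colored partitions of n. -/
/-- A colored partition of `n`, where the part `j` comes in `b j` colors, is a multiset of
pairs `(j, c)` with `j` a positive integer and `c ∈ {1, …, b j}`, whose weight (the sum of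
the first coordinates, counted with multiplicity) is `n`. -/
def IsColoredPartition (b : ℕ → ℕ) (n : ℕ) (M : Multiset (ℕ × ℕ)) : Prop :=
  (∀ p ∈ M, 0 < p.1 ∧ 1 ≤ p.2 ∧ p.2 ≤ b p.1) ∧ (M.map Prod.fst).sum = n

/-- `h n`: the number of colored partitions of `n` (so `h 0 = 1`). -/
noncomputable def coloredh (b : ℕ → ℕ) (n : ℕ) : ℕ := Nat.card {M // IsColoredPartition b n M}

/-- `F k n`: the total number of parts with first coordinate `k`, counted with multiplicity,
over all colored partitions of `n`. -/
noncomputable def coloredF (b : ℕ → ℕ) (k n : ℕ) : ℕ :=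
  ∑ᶠ M ∈ {M | IsColoredPartition b n M}, (Multiset.filter (fun p => p.1 = k) M).card

/-- `G k n`: the total number of distinct colored parts occurring with multiplicity at least
`k`, summed over all colored partitions of `n`. -/
noncomputable def coloredG (b : ℕ → ℕ) (k n : ℕ) : ℕ :=
  ∑ᶠ M ∈ {M | IsColoredPartition b n M},
    (M.toFinset.filter fun p => k ≤ M.count p).card

/-!
Exchanging `m` copies of the part `(k, c)` for `k` copies of `(m, c)` preserves the weight, so
the partitions of `n` containing `(k, c)` at least `m` times are equinumerous with those
containing `(m, c)` at least `k` times (both correspond to the partitions of `n - km`).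
Summing over `m ≥ 1` and the colors `c`, the first count adds up to `F_k(n)` (a part `(k, c)` of
multiplicity `μ` is counted once for each `m ≤ μ`) and the second to `G_k(n)`.
-/

open Finset

lemma Multiset.filter_toFinset_le_count {α : Type*} [DecidableEq α] {M : Multiset α}
    {s : Finset α} {k : ℕ} (hk : 1 ≤ k) (hs : ∀ a ∈ M, a ∈ s) :
    {a ∈ M.toFinset | k ≤ M.count a} = {a ∈ s | k ≤ M.count a} := by
  ext a
  simp only [Finset.mem_filter, Multiset.mem_toFinset]
  exact ⟨fun h => ⟨hs a h.1, h.2⟩, fun h => ⟨Multiset.count_pos.1 (by omega), h.2⟩⟩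

def IsColoredPart (b : ℕ → ℕ) (p : ℕ × ℕ) : Prop :=
  0 < p.1 ∧ 1 ≤ p.2 ∧ p.2 ≤ b p.1

namespace IsColoredPartition

variable {b : ℕ → ℕ} {n : ℕ} {M : Multiset (ℕ × ℕ)}

lemma isColoredPart (hM : IsColoredPartition b n M) {p : ℕ × ℕ} (hp : p ∈ M) :
    IsColoredPart b p :=
  hM.1 p hp

lemma fst_le (hM : IsColoredPartition b n M) {p : ℕ × ℕ} (hp : p ∈ M) : p.1 ≤ n :=
  hM.2 ▸ Multiset.le_sum_of_mem (Multiset.mem_map_of_mem _ hp)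

lemma mem_Icc_product (hM : IsColoredPartition b n M) {B : ℕ} (hB : ∀ j ≤ n, b j ≤ B)
    {p : ℕ × ℕ} (hp : p ∈ M) : p ∈ Icc 1 n ×ˢ Icc 1 B := by
  obtain ⟨h1, h2, h3⟩ := hM.isColoredPart hp
  have hfst := hM.fst_le hp
  exact mem_product.2 ⟨mem_Icc.2 ⟨h1, hfst⟩, mem_Icc.2 ⟨h2, h3.trans (hB _ hfst)⟩⟩

lemma card_le (hM : IsColoredPartition b n M) : Multiset.card M ≤ n := by
  have hpos : ∀ x ∈ M.map Prod.fst, 1 ≤ x := by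
    simp only [Multiset.mem_map]
    rintro _ ⟨p, hp, rfl⟩
    exact (hM.isColoredPart hp).1
  simpa [hM.2] using Multiset.card_nsmul_le_sum hpos

lemma count_le (hM : IsColoredPartition b n M) (p : ℕ × ℕ) : M.count p ≤ n :=
  (Multiset.count_le_card p M).trans hM.card_le

lemma count_eq_card_filter_le (hM : IsColoredPartition b n M) (p : ℕ × ℕ) :
    M.count p = #{m ∈ Icc 1 n | m ≤ M.count p} := by
  have hle := hM.count_le p
  have : {m ∈ Icc 1 n | m ≤ M.count p} = Icc 1 (M.count p) := by
    ext m
    simp only [mem_filter, mem_Icc]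
    omega
  rw [this, Nat.card_Icc, Nat.add_sub_cancel]

lemma card_filter_fst_eq (hM : IsColoredPartition b n M) (k : ℕ) :
    Multiset.card (M.filter fun p => p.1 = k) = ∑ c ∈ Icc 1 (b k), M.count (k, c) := by
  rw [← Multiset.sum_count_eq_card (s := {k} ×ˢ Icc 1 (b k)), sum_product, sum_singleton]
  · exact sum_congr rfl fun c _ => Multiset.count_filter_of_pos rfl
  · intro p hp
    rw [Multiset.mem_filter] at hp
    obtain ⟨-, h1, h2⟩ := hM.isColoredPart hp.1
    obtain ⟨j, c⟩ := p
    obtain rfl : j = k := hp.2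
    simp [h1, h2]

lemma exchange (hM : IsColoredPartition b n M) {p q : ℕ × ℕ} {i j : ℕ}
    (hi : i ≤ M.count p) (hq : IsColoredPart b q) (hpq : i * p.1 = j * q.1) :
    IsColoredPartition b n (M - Multiset.replicate i p + Multiset.replicate j q) := by
  obtain ⟨X, rfl⟩ := Multiset.le_iff_exists_add.1 (Multiset.le_count_iff_replicate_le.1 hi)
  rw [add_tsub_cancel_left]
  refine ⟨fun r hr => ?_, ?_⟩
  · rcases Multiset.mem_add.1 hr with hr | hr
    · exact hM.isColoredPart (Multiset.mem_add.2 (Or.inr hr))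
    · rwa [Multiset.eq_of_mem_replicate hr]
  · have hw := hM.2
    simp only [Multiset.map_add, Multiset.sum_add, Multiset.map_replicate,
      Multiset.sum_replicate, smul_eq_mul] at hw ⊢
    omega

end IsColoredPartition

lemma setOf_isColoredPartition_finite (b : ℕ → ℕ) (n : ℕ) :
    {M | IsColoredPartition b n M}.Finite := by
  set S := Icc 1 n ×ˢ Icc 1 ((range (n + 1)).sup b)
  have hS : ∀ j ≤ n, b j ≤ (range (n + 1)).sup b := fun j hj =>
    le_sup (mem_range.2 (Nat.lt_succ_of_le hj))
  refine (n • S.val).powerset.toFinset.finite_toSet.subset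
    fun M (hM : IsColoredPartition b n M) => ?_
  rw [mem_coe, Multiset.mem_toFinset, Multiset.mem_powerset]
  refine Multiset.le_iff_count.2 fun p => ?_
  by_cases hp : p ∈ M
  · rw [Multiset.count_nsmul, Multiset.count_eq_one_of_mem S.nodup (hM.mem_Icc_product hS hp),
      mul_one]
    exact hM.count_le p
  · simp [Multiset.count_eq_zero_of_notMem hp]

noncomputable def coloredPartitions (b : ℕ → ℕ) (n : ℕ) : Finset (Multiset (ℕ × ℕ)) :=
  (setOf_isColoredPartition_finite b n).toFinset

@[simp]
lemma mem_coloredPartitions {b : ℕ → ℕ} {n : ℕ} {M : Multiset (ℕ × ℕ)} :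
    M ∈ coloredPartitions b n ↔ IsColoredPartition b n M :=
  Set.Finite.mem_toFinset _

lemma finsum_mem_isColoredPartition {β : Type*} [AddCommMonoid β] (b : ℕ → ℕ) (n : ℕ)
    (f : Multiset (ℕ × ℕ) → β) :
    ∑ᶠ M ∈ {M | IsColoredPartition b n M}, f M = ∑ M ∈ coloredPartitions b n, f M :=
  finsum_mem_eq_finite_toFinset_sum f _

lemma card_filter_le_count_eq {b : ℕ → ℕ} {n i j : ℕ} {p q : ℕ × ℕ}
    (hp : IsColoredPart b p) (hq : IsColoredPart b q) (hpq : i * p.1 = j * q.1) :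
    #{M ∈ coloredPartitions b n | i ≤ M.count p} =
      #{M ∈ coloredPartitions b n | j ≤ M.count q} := by
  have maps : ∀ {p q : ℕ × ℕ} {i j : ℕ}, IsColoredPart b q → i * p.1 = j * q.1 →
      Set.MapsTo (fun M => M - Multiset.replicate i p + Multiset.replicate j q)
        ↑{M ∈ coloredPartitions b n | i ≤ M.count p}
        ↑{M ∈ coloredPartitions b n | j ≤ M.count q} := by
    intro p q i j hq hpq M hM
    simp only [coe_filter, mem_coloredPartitions] at hM ⊢
    refine ⟨hM.1.exchange hM.2 hq hpq, ?_⟩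
    rw [Multiset.count_add, Multiset.count_replicate_self]
    omega
  have inv : ∀ {p q : ℕ × ℕ} {i j : ℕ}, Set.LeftInvOn
      (fun M => M - Multiset.replicate j q + Multiset.replicate i p)
      (fun M => M - Multiset.replicate i p + Multiset.replicate j q)
      ↑{M ∈ coloredPartitions b n | i ≤ M.count p} := by
    intro p q i j M hM
    simp only [coe_filter] at hM
    simp only [add_tsub_cancel_right]
    exact tsub_add_cancel_of_le (Multiset.le_count_iff_replicate_le.1 hM.2)
  exact card_nbij' _ _ (maps hq hpq) (maps hp hpq.symm) inv inv

lemma coloredF_const_eq_sum (b k n : ℕ) :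
    coloredF (fun _ => b) k n = ∑ p ∈ Icc 1 n ×ˢ Icc 1 b,
      #{M ∈ coloredPartitions (fun _ => b) n | p.1 ≤ M.count (k, p.2)} := by
  simp_rw [card_filter]
  rw [coloredF, finsum_mem_isColoredPartition, sum_comm]
  refine sum_congr rfl fun M hM => ?_
  replace hM := mem_coloredPartitions.1 hM
  rw [hM.card_filter_fst_eq, sum_product_right]
  exact sum_congr rfl fun c _ => (hM.count_eq_card_filter_le (k, c)).trans (card_filter _ _)

lemma coloredG_const_eq_sum (b : ℕ) {k : ℕ} (hk : 1 ≤ k) (n : ℕ) :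
    coloredG (fun _ => b) k n = ∑ p ∈ Icc 1 n ×ˢ Icc 1 b,
      #{M ∈ coloredPartitions (fun _ => b) n | k ≤ M.count p} := by
  simp_rw [card_filter]
  rw [coloredG, finsum_mem_isColoredPartition, sum_comm]
  refine sum_congr rfl fun M hM => ?_
  replace hM := mem_coloredPartitions.1 hM
  rw [← card_filter, Multiset.filter_toFinset_le_count hk
    fun p => hM.mem_Icc_product fun _ _ => le_rfl]

theorem coloredF_eq_coloredG_general (b : ℕ) (n k : ℕ) (hk : 1 ≤ k) :
    coloredF (fun _ => b) k n = coloredG (fun _ => b) k n := by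
  rw [coloredF_const_eq_sum, coloredG_const_eq_sum b hk]
  refine sum_congr rfl fun p hp => ?_
  obtain ⟨⟨hm, -⟩, hc⟩ := by simpa only [mem_product, mem_Icc] using hp
  exact card_filter_le_count_eq ⟨hk, hc⟩ ⟨hm, hc⟩ (mul_comm _ _)

/-- Stanley–Elder–Fine theorem for `b`-colored partitions (each part comes in `b` colors). -/
theorem coloredF_eq_coloredG (b : ℕ) (hb : 0 < b) (n k : ℕ) (hn : 0 < n)
    (hk : 1 ≤ k) (hkn : k ≤ n) :
    coloredF (fun _ => b) k n = coloredG (fun _ => b) k n :=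
  coloredF_eq_coloredG_general b n k hk
end

section
/- For every positive integer n and every positive integer k, the quantity G_k(n) for b-colored partitions satisfies G_k(n) = b · Σ_{j=1}^{⌊n/k⌋} h(n − jk). -/
lemma card_le_weight (M : Multiset (ℕ × ℕ)) (h : ∀ p ∈ M, 0 < p.1) :
    M.card ≤ (M.map Prod.fst).sum := by
  have h' : ∀ x ∈ M.map Prod.fst, 1 ≤ x := by
    intro x hx
    obtain ⟨p, hp, rfl⟩ := Multiset.mem_map.mp hx
    exact h p hp
  simpa using Multiset.card_nsmul_le_sum h'

lemma setFinite (b n : ℕ) : {M | IsColoredPartition (fun _ => b) n M}.Finite := by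
  classical
  apply Set.Finite.subset
    (s := {M : Multiset (ℕ × ℕ) | M ≤ n • ((Finset.Icc 1 n ×ˢ Finset.Icc 1 b).val)})
  · have hsub : ∀ M ∈ {M : Multiset (ℕ × ℕ) | M ≤ n • ((Finset.Icc 1 n ×ˢ Finset.Icc 1 b).val)},
        M ∈ (n • ((Finset.Icc 1 n ×ˢ Finset.Icc 1 b).val)).powerset.toFinset := by
      intro M hM
      simpa [Multiset.mem_powerset] using hM
    exact Set.Finite.subset
      ((n • ((Finset.Icc 1 n ×ˢ Finset.Icc 1 b).val)).powerset.toFinset.finite_toSet) hsub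
  · intro M hM
    obtain ⟨h1, h2⟩ := hM
    simp only [Set.mem_setOf_eq, Multiset.le_iff_count]
    intro p
    by_cases hp : p ∈ M
    · have hcard : Multiset.count p M ≤ n := by
        calc Multiset.count p M ≤ M.card := Multiset.count_le_card _ _
          _ ≤ (M.map Prod.fst).sum := card_le_weight M (fun q hq => (h1 q hq).1)
          _ = n := h2
      have hpm : p ∈ (Finset.Icc 1 n ×ˢ Finset.Icc 1 b).val := by
        obtain ⟨hp1, hp2, hp3⟩ := h1 p hp
        have hle : p.1 ≤ n := by
          have := Multiset.single_le_sum (s := M.map Prod.fst) (by simp) p.1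
            (Multiset.mem_map_of_mem _ hp)
          omega
        simp only [Finset.mem_val, Finset.mem_product, Finset.mem_Icc]
        exact ⟨⟨hp1, hle⟩, hp2, hp3⟩
      calc Multiset.count p M ≤ n := hcard
        _ ≤ n * Multiset.count p (Finset.Icc 1 n ×ˢ Finset.Icc 1 b).val := by
            have h1c : 1 ≤ Multiset.count p (Finset.Icc 1 n ×ˢ Finset.Icc 1 b).val :=
              Multiset.one_le_count_iff_mem.mpr hpm
            nlinarith
        _ = Multiset.count p (n • (Finset.Icc 1 n ×ˢ Finset.Icc 1 b).val) := by
            simp [Multiset.count_nsmul]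
    · simp [Multiset.count_eq_zero_of_notMem hp]

noncomputable def Sfin (b n : ℕ) : Finset (Multiset (ℕ × ℕ)) := (setFinite b n).toFinset

lemma coloredh_eq (b n : ℕ) : coloredh (fun _ => b) n = (Sfin b n).card := by
  have h0 : coloredh (fun _ => b) n
      = Nat.card {M | IsColoredPartition (fun _ => b) n M} := rfl
  rw [h0, Nat.card_coe_set_eq, Set.ncard_eq_toFinset_card _ (setFinite b n)]
  rfl

/-- The key bijection: partitions of `n` containing `(j,c)` with multiplicity at least `k`
correspond to partitions of `n - k*j`. -/
lemma card_filter_count (b n k j c : ℕ) (hj : 0 < j) (hc1 : 1 ≤ c) (hc2 : c ≤ b)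
    (hjk : k * j ≤ n) :
    ((Sfin b n).filter (fun M => k ≤ M.count (j, c))).card = (Sfin b (n - k * j)).card := by
  classical
  apply Finset.card_bij' (fun M _ => M - Multiset.replicate k (j, c))
    (fun M _ => M + Multiset.replicate k (j, c))
  · intro M hM
    simp only [Finset.mem_filter, Sfin, Set.Finite.mem_toFinset, Set.mem_setOf_eq] at hM ⊢
    obtain ⟨⟨h1, h2⟩, hcount⟩ := hM
    have hle : Multiset.replicate k (j, c) ≤ M := by
      rw [Multiset.le_iff_count]
      intro p
      rw [Multiset.count_replicate]
      split_ifs with hp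
      · subst hp; exact hcount
      · exact Nat.zero_le _
    constructor
    · intro p hp
      exact h1 p (Multiset.mem_of_le (tsub_le_self) hp)
    · have heq : M = (M - Multiset.replicate k (j, c)) + Multiset.replicate k (j, c) :=
        (tsub_add_cancel_of_le hle).symm
      have hsum : ((M - Multiset.replicate k (j, c)).map Prod.fst).sum + k * j = n := by
        conv_rhs => rw [← h2, heq]
        simp [Multiset.map_replicate, Multiset.sum_replicate, mul_comm]
      omega
  · intro M hM
    simp only [Sfin, Set.Finite.mem_toFinset, Set.mem_setOf_eq] at hM
    obtain ⟨h1, h2⟩ := hM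
    simp only [Finset.mem_filter, Sfin, Set.Finite.mem_toFinset, Set.mem_setOf_eq]
    refine ⟨⟨?_, ?_⟩, ?_⟩
    · intro p hp
      rcases Multiset.mem_add.mp hp with h | h
      · exact h1 p h
      · have := Multiset.eq_of_mem_replicate h
        subst this
        exact ⟨hj, hc1, hc2⟩
    · simp only [Multiset.map_add, Multiset.sum_add, Multiset.map_replicate,
        Multiset.sum_replicate, smul_eq_mul, h2]
      omega
    · rw [Multiset.count_add, Multiset.count_replicate, if_pos rfl]
      omega
  · intro M hM
    simp only [Finset.mem_filter, Sfin, Set.Finite.mem_toFinset, Set.mem_setOf_eq] at hM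
    have hle : Multiset.replicate k (j, c) ≤ M := by
      rw [Multiset.le_iff_count]
      intro p
      rw [Multiset.count_replicate]
      split_ifs with hp
      · subst hp; exact hM.2
      · exact Nat.zero_le _
    exact tsub_add_cancel_of_le hle
  · intro M hM
    simp

/-- For `b`-colored partitions, `G_k(n) = b · Σ_{j=1}^{⌊n/k⌋} h(n - jk)`. -/
theorem coloredG_eq_sum (b : ℕ) (hb : 0 < b) (n k : ℕ) (hn : 0 < n) (hk : 0 < k) :
    coloredG (fun _ => b) k n
      = b * ∑ j ∈ Finset.Icc 1 (n / k), coloredh (fun _ => b) (n - j * k) := by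
  classical
  rw [coloredG, ← Set.Finite.coe_toFinset (setFinite b n), finsum_mem_coe_finset]
  have key : ∀ M ∈ (setFinite b n).toFinset,
      (M.toFinset.filter fun p => k ≤ M.count p).card
        = ∑ p ∈ (Finset.Icc 1 (n / k) ×ˢ Finset.Icc 1 b),
            (if k ≤ M.count p then 1 else 0) := by
    intro M hM
    simp only [Set.Finite.mem_toFinset, Set.mem_setOf_eq] at hM
    obtain ⟨h1, h2⟩ := hM
    rw [← Finset.card_filter]
    congr 1
    ext p
    simp only [Finset.mem_filter, Multiset.mem_toFinset, Finset.mem_product, Finset.mem_Icc]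
    constructor
    · rintro ⟨hpM, hcnt⟩
      have hrep : Multiset.replicate (M.count p) p ≤ M :=
        Multiset.le_count_iff_replicate_le.mp le_rfl
      have hsum : M.count p * p.1 ≤ n := by
        obtain ⟨u, hu⟩ := Multiset.le_iff_exists_add.mp hrep
        have hsum2 : (M.map Prod.fst).sum = M.count p * p.1 + (u.map Prod.fst).sum := by
          conv_lhs => rw [hu]
          simp only [Multiset.map_add, Multiset.sum_add, Multiset.map_replicate,
            Multiset.sum_replicate, smul_eq_mul]
        omega
      obtain ⟨hp1, hp2, hp3⟩ := h1 p hpM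
      have hkp : k * p.1 ≤ n := le_trans (Nat.mul_le_mul_right _ hcnt) hsum
      have hdiv : p.1 ≤ n / k := Nat.le_div_iff_mul_le hk |>.mpr (by rw [mul_comm]; exact hkp)
      exact ⟨⟨⟨hp1, hdiv⟩, hp2, hp3⟩, hcnt⟩
    · rintro ⟨_, hcnt⟩
      refine ⟨?_, hcnt⟩
      rw [← Multiset.count_pos]
      omega
  rw [Finset.sum_congr rfl key, Finset.sum_comm]
  have key2 : ∀ p ∈ (Finset.Icc 1 (n / k) ×ˢ Finset.Icc 1 b),
      (∑ M ∈ (setFinite b n).toFinset, if k ≤ M.count p then 1 else 0)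
        = coloredh (fun _ => b) (n - p.1 * k) := by
    rintro ⟨j, c⟩ hp
    simp only [Finset.mem_product, Finset.mem_Icc] at hp
    obtain ⟨⟨hj1, hj2⟩, hc1, hc2⟩ := hp
    have hkj : k * j ≤ n := by
      rw [mul_comm]
      exact (Nat.le_div_iff_mul_le hk).mp hj2
    rw [← Finset.card_filter, coloredh_eq]
    have hcf := card_filter_count b n k j c hj1 hc1 hc2 hkj
    rw [show (setFinite b n).toFinset = Sfin b n from rfl, hcf, mul_comm j k]
  rw [Finset.sum_congr rfl key2, Finset.sum_product]
  rw [Finset.mul_sum]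
  apply Finset.sum_congr rfl
  intro j hj
  simp
end

section
/- For all positive integers n and k, k · F_k(n) = H_k(n) − H_k(n − k), where H_k(m) = 0 for m ≤ 0: k times the total number of parts with first coordinate k over all b-colored partitions of n equals the difference of the sums of parts divisible by k, counted without multiplicity, in all b-colored partitions of n and of n − k. -/
/-- `H k n`: the sum, over all colored partitions of `n`, of the sum of `j` over the
distinct colored parts `(j, c)` occurring in the partition (each counted once, without
multiplicity) such that `k` divides `j`. -/
noncomputable def coloredH (b : ℕ → ℕ) (k n : ℕ) : ℕ :=
  ∑ᶠ M ∈ {M | IsColoredPartition b n M},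
    ∑ p ∈ M.toFinset.filter (fun p => k ∣ p.1), p.1

open Finset

namespace ColoredAux

lemma part_le {b n : ℕ} {M : Multiset (ℕ×ℕ)} (h : IsColoredPartition (fun _ => b) n M)
    {p : ℕ × ℕ} (hp : p ∈ M) : p.1 ≤ n := by
  obtain ⟨h1, h2⟩ := h
  calc p.1 ≤ (M.map Prod.fst).sum :=
        Multiset.single_le_sum (fun x _ => Nat.zero_le x) _ (Multiset.mem_map_of_mem _ hp)
    _ = n := h2

lemma card_le {b n : ℕ} {M : Multiset (ℕ×ℕ)} (h : IsColoredPartition (fun _ => b) n M) :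
    Multiset.card M ≤ n := by
  obtain ⟨h1, h2⟩ := h
  have : Multiset.card (M.map Prod.fst) • 1 ≤ (M.map Prod.fst).sum := by
    apply Multiset.card_nsmul_le_sum
    intro x hx
    obtain ⟨p, hp, rfl⟩ := Multiset.mem_map.mp hx
    exact (h1 p hp).1
  simpa [h2] using this

lemma partFinite (b n : ℕ) : {M | IsColoredPartition (fun _ => b) n M}.Finite := by
  apply Set.Finite.subset
    ((n • ((Finset.Icc 1 n ×ˢ Finset.Icc 1 b : Finset (ℕ×ℕ))).val).powerset.toFinset.finite_toSet)
  intro M hM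
  simp only [Finset.coe_sort_coe, Finset.mem_coe, Multiset.mem_toFinset, Multiset.mem_powerset]
  rw [Multiset.le_iff_count]
  intro x
  by_cases hx : x ∈ M
  · have hx1 : x ∈ (Finset.Icc 1 n ×ˢ Finset.Icc 1 b : Finset (ℕ×ℕ)) := by
      obtain ⟨ha, hb2, hc⟩ := hM.1 x hx
      have hc' : x.2 ≤ b := hc
      have := part_le hM hx
      simp only [Finset.mem_product, Finset.mem_Icc]
      omega
    rw [Multiset.count_nsmul]
    have h1 : Multiset.count x (Finset.Icc 1 n ×ˢ Finset.Icc 1 b : Finset (ℕ×ℕ)).val = 1 :=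
      Multiset.count_eq_one_of_mem (Finset.Icc 1 n ×ˢ Finset.Icc 1 b).nodup hx1
    rw [h1, mul_one]
    exact (Multiset.count_le_card x M).trans (card_le hM)
  · simp [Multiset.count_eq_zero_of_notMem hx]

noncomputable def PF (b n : ℕ) : Finset (Multiset (ℕ×ℕ)) := (partFinite b n).toFinset

lemma mem_PF {b n : ℕ} {M : Multiset (ℕ×ℕ)} :
    M ∈ PF b n ↔ IsColoredPartition (fun _ => b) n M := (partFinite b n).mem_toFinset

end ColoredAux

namespace ColoredAux

variable {b : ℕ}

lemma erase_mem_PF {j c n : ℕ} (hj : 0 < j) {M : Multiset (ℕ×ℕ)} (hM : M ∈ PF b n)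
    (hmem : (j, c) ∈ M) : M.erase (j, c) ∈ PF b (n - j) := by
  obtain ⟨h1, h2⟩ := mem_PF.mp hM
  rw [mem_PF]
  constructor
  · exact fun p hp => h1 p (Multiset.mem_of_mem_erase hp)
  · have hM' : (j, c) ::ₘ M.erase (j, c) = M := Multiset.cons_erase hmem
    have : (M.map Prod.fst).sum = j + ((M.erase (j,c)).map Prod.fst).sum := by
      rw [← hM']; simp
    omega

lemma cons_mem_PF {j c n : ℕ} (hj : 0 < j) (hjn : j ≤ n) (hc1 : 1 ≤ c) (hcb : c ≤ b)
    {M : Multiset (ℕ×ℕ)} (hM : M ∈ PF b (n - j)) : (j, c) ::ₘ M ∈ PF b n := by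
  obtain ⟨h1, h2⟩ := mem_PF.mp hM
  rw [mem_PF]
  constructor
  · intro p hp
    rcases Multiset.mem_cons.mp hp with h | h
    · subst h; exact ⟨hj, hc1, hcb⟩
    · exact h1 p h
  · simp only [Multiset.map_cons, Multiset.sum_cons, h2]
    omega

lemma sum_insert_bij {j c n : ℕ} (hj : 0 < j) (hjn : j ≤ n) (hc1 : 1 ≤ c) (hcb : c ≤ b)
    (f : Multiset (ℕ×ℕ) → ℕ) :
    ∑ M ∈ (PF b n).filter (fun M => (j,c) ∈ M), f M
      = ∑ M ∈ PF b (n-j), f ((j,c) ::ₘ M) := by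
  apply Finset.sum_nbij' (fun M => M.erase (j,c)) (fun M => (j,c) ::ₘ M)
  · intro M hM
    rw [Finset.mem_filter] at hM
    exact erase_mem_PF hj hM.1 hM.2
  · intro M hM
    rw [Finset.mem_filter]
    exact ⟨cons_mem_PF hj hjn hc1 hcb hM, Multiset.mem_cons_self _ _⟩
  · intro M hM
    rw [Finset.mem_filter] at hM
    exact Multiset.cons_erase hM.2
  · intro M _
    exact Multiset.erase_cons_head _ _
  · intro M hM
    rw [Finset.mem_filter] at hM
    rw [Multiset.cons_erase hM.2]

lemma card_mem_eq {j c n : ℕ} (hj : 0 < j) (hjn : j ≤ n) (hc1 : 1 ≤ c) (hcb : c ≤ b) :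
    ((PF b n).filter (fun M => (j,c) ∈ M)).card = (PF b (n-j)).card := by
  have := sum_insert_bij (b := b) hj hjn hc1 hcb (fun _ => 1)
  simpa using this

lemma count_sum_rec {j c n : ℕ} (hj : 0 < j) (hjn : j ≤ n) (hc1 : 1 ≤ c) (hcb : c ≤ b) :
    ∑ M ∈ PF b n, M.count (j,c)
      = (PF b (n-j)).card + ∑ M ∈ PF b (n-j), M.count (j,c) := by
  rw [← Finset.sum_filter_of_ne (p := fun M => (j,c) ∈ M)
    (fun M _ h => by simpa using Multiset.count_pos.mp (Nat.pos_of_ne_zero h))]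
  rw [sum_insert_bij hj hjn hc1 hcb]
  simp [Multiset.count_cons_self, Finset.sum_add_distrib, add_comm]

lemma count_sum_zero {j c n : ℕ} (hjn : n < j) :
    ∑ M ∈ PF b n, M.count (j,c) = 0 := by
  apply Finset.sum_eq_zero
  intro M hM
  rw [Multiset.count_eq_zero]
  intro hmem
  exact absurd (part_le (mem_PF.mp hM) hmem) (by omega)

end ColoredAux

namespace ColoredAux

variable {b : ℕ}

lemma count_closed {j c : ℕ} (hj : 0 < j) (hc1 : 1 ≤ c) (hcb : c ≤ b) : ∀ n,
    ∑ M ∈ PF b n, M.count (j,c) = ∑ i ∈ range (n/j), (PF b (n-(i+1)*j)).card := by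
  intro n
  induction n using Nat.strong_induction_on with
  | _ n ih =>
    rcases lt_or_ge n j with h | h
    · rw [count_sum_zero h, Nat.div_eq_of_lt h]
      simp
    · rw [count_sum_rec hj h hc1 hcb, ih (n - j) (by omega)]
      have hq : n / j = (n - j) / j + 1 := by
        conv_lhs => rw [← Nat.sub_add_cancel h]
        rw [Nat.add_div_right _ hj]
      rw [hq, Finset.sum_range_succ']
      have harg : ∀ i : ℕ, n - j - (i+1)*j = n - (i+1+1)*j := by
        intro i
        rw [Nat.sub_sub]
        congr 1
        ring
      rw [add_comm]
      congr 1
      · apply Finset.sum_congr rfl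
        intro i _
        rw [harg]
      · norm_num

lemma filter_card_eq {k n : ℕ} {M : Multiset (ℕ×ℕ)} (hM : M ∈ PF b n) :
    (Multiset.filter (fun p => p.1 = k) M).card = ∑ c ∈ Finset.Icc 1 b, M.count (k,c) := by
  set N := Multiset.filter (fun p => p.1 = k) M with hN
  have hcnt : ∀ c, M.count (k,c) = N.count (k,c) := by
    intro c
    rw [hN, Multiset.count_filter]
    simp
  simp_rw [hcnt]
  rw [← Multiset.toFinset_sum_count_eq N]
  have hsub : N.toFinset ⊆ ({k} : Finset ℕ) ×ˢ Finset.Icc 1 b := by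
    intro p hp
    rw [Multiset.mem_toFinset, hN, Multiset.mem_filter] at hp
    obtain ⟨hpM, hpk⟩ := hp
    obtain ⟨h1, h2, h3⟩ := (mem_PF.mp hM).1 p hpM
    have h3' : p.2 ≤ b := h3
    simp only [Finset.mem_product, Finset.mem_singleton, Finset.mem_Icc]
    exact ⟨hpk, h2, h3'⟩
  rw [Finset.sum_subset hsub]
  · rw [Finset.sum_product, Finset.sum_singleton]
  · intro p _ hp
    rw [Multiset.mem_toFinset] at hp
    exact Multiset.count_eq_zero_of_notMem hp

end ColoredAux

namespace ColoredAux

variable {b : ℕ}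

lemma finsum_eq (n : ℕ) (f : Multiset (ℕ×ℕ) → ℕ) :
    ∑ᶠ M ∈ {M | IsColoredPartition (fun _ => b) n M}, f M = ∑ M ∈ PF b n, f M := by
  rw [← (partFinite b n).coe_toFinset, finsum_mem_coe_finset]
  rfl

lemma F_closed {k : ℕ} (hk : 0 < k) (hb : 0 < b) (n : ℕ) :
    coloredF (fun _ => b) k n = b * ∑ i ∈ range (n/k), (PF b (n-(i+1)*k)).card := by
  rw [coloredF, finsum_eq]
  rw [Finset.sum_congr rfl (fun M hM => filter_card_eq hM)]
  rw [Finset.sum_comm]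
  have h1 : ∀ c ∈ Finset.Icc 1 b, ∑ M ∈ PF b n, M.count (k,c)
      = ∑ i ∈ range (n/k), (PF b (n-(i+1)*k)).card := by
    intro c hc
    rw [Finset.mem_Icc] at hc
    exact count_closed hk hc.1 hc.2 n
  rw [Finset.sum_congr rfl h1, Finset.sum_const, Nat.card_Icc, smul_eq_mul, Nat.add_sub_cancel]

lemma H_closed {k : ℕ} (hk : 0 < k) (n : ℕ) :
    coloredH (fun _ => b) k n
      = ∑ i ∈ range (n/k), b * (((i+1)*k) * (PF b (n-(i+1)*k)).card) := by
  rw [coloredH, finsum_eq]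
  set S : Finset (ℕ×ℕ) := ((Finset.Icc 1 n).filter (fun j => k ∣ j)) ×ˢ Finset.Icc 1 b with hS
  have step1 : ∀ M ∈ PF b n,
      (∑ p ∈ M.toFinset.filter (fun p => k ∣ p.1), p.1)
        = ∑ p ∈ S, if p ∈ M then p.1 else 0 := by
    intro M hM
    rw [← Finset.sum_filter]
    apply Finset.sum_congr _ (fun _ _ => rfl)
    ext p
    simp only [Finset.mem_filter, Multiset.mem_toFinset, hS, Finset.mem_product, Finset.mem_Icc]
    constructor
    · rintro ⟨hpM, hdvd⟩
      obtain ⟨h1, h2, h3⟩ := (mem_PF.mp hM).1 p hpM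
      have h3' : p.2 ≤ b := h3
      have h4 := part_le (mem_PF.mp hM) hpM
      exact ⟨⟨⟨⟨h1, h4⟩, hdvd⟩, h2, h3'⟩, hpM⟩
    · rintro ⟨⟨⟨_, hdvd⟩, _⟩, hpM⟩
      exact ⟨hpM, hdvd⟩
  rw [Finset.sum_congr rfl step1, Finset.sum_comm]
  have step2 : ∀ p ∈ S, (∑ M ∈ PF b n, if p ∈ M then p.1 else 0)
      = (PF b (n - p.1)).card * p.1 := by
    intro p hp
    rw [hS, Finset.mem_product, Finset.mem_filter, Finset.mem_Icc, Finset.mem_Icc] at hp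
    obtain ⟨⟨⟨hp1, hp2⟩, hdvd⟩, hc1, hc2⟩ := hp
    rw [← Finset.sum_filter, Finset.sum_const, smul_eq_mul]
    rw [card_mem_eq (j := p.1) (c := p.2) (by omega) hp2 hc1 hc2]
  rw [Finset.sum_congr rfl step2, hS, Finset.sum_product]
  have step3 : ∀ j ∈ (Finset.Icc 1 n).filter (fun j => k ∣ j),
      (∑ c ∈ Finset.Icc 1 b, (PF b (n-j)).card * j) = b * ((PF b (n-j)).card * j) := by
    intro j _
    rw [Finset.sum_const, Nat.card_Icc, Nat.add_sub_cancel, smul_eq_mul]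
  rw [Finset.sum_congr rfl step3]
  apply Finset.sum_nbij' (fun j => j / k - 1) (fun i => (i+1)*k)
  · intro j hj
    rw [Finset.mem_filter, Finset.mem_Icc] at hj
    obtain ⟨⟨hj1, hj2⟩, hdvd⟩ := hj
    have e1 : 1 ≤ j / k := (Nat.one_le_div_iff hk).mpr (Nat.le_of_dvd (by omega) hdvd)
    have e2 : j / k ≤ n / k := Nat.div_le_div_right hj2
    rw [Finset.mem_range]
    omega
  · intro i hi
    rw [Finset.mem_range] at hi
    rw [Finset.mem_filter, Finset.mem_Icc]
    refine ⟨⟨Nat.mul_pos (by omega) hk, ?_⟩, dvd_mul_left k (i+1)⟩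
    calc (i+1)*k ≤ (n/k)*k := Nat.mul_le_mul_right _ (by omega)
      _ ≤ n := Nat.div_mul_le_self n k
  · intro j hj
    rw [Finset.mem_filter, Finset.mem_Icc] at hj
    obtain ⟨⟨hj1, hj2⟩, hdvd⟩ := hj
    have e1 : 1 ≤ j / k := (Nat.one_le_div_iff hk).mpr (Nat.le_of_dvd (by omega) hdvd)
    have e2 : j / k - 1 + 1 = j / k := by omega
    rw [e2, Nat.div_mul_cancel hdvd]
  · intro i _
    rw [Nat.mul_div_cancel _ hk]
    omega
  · intro j hj
    rw [Finset.mem_filter, Finset.mem_Icc] at hj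
    obtain ⟨⟨hj1, hj2⟩, hdvd⟩ := hj
    have e1 : 1 ≤ j / k := (Nat.one_le_div_iff hk).mpr (Nat.le_of_dvd (by omega) hdvd)
    have e2 : (j / k - 1 + 1) * k = j := by
      rw [show j / k - 1 + 1 = j / k by omega, Nat.div_mul_cancel hdvd]
    rw [e2]
    ring

lemma key {k : ℕ} (hk : 0 < k) (hb : 0 < b) (n : ℕ) :
    coloredH (fun _ => b) k n
      = k * coloredF (fun _ => b) k n + coloredH (fun _ => b) k (n - k) := by
  rcases lt_or_ge n k with h | h
  · have h0 : n / k = 0 := Nat.div_eq_of_lt h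
    have hnk : n - k = 0 := by omega
    rw [H_closed hk, H_closed hk, F_closed hk hb, h0, hnk]
    simp
  · have hq : n / k = (n - k) / k + 1 := by
      conv_lhs => rw [← Nat.sub_add_cancel h]
      rw [Nat.add_div_right _ hk]
    rw [H_closed hk n, H_closed hk (n-k), F_closed hk hb n, hq,
      Finset.sum_range_succ', Finset.sum_range_succ']
    have harg : ∀ i : ℕ, (n - k) - (i+1)*k = n - (i+1+1)*k := by
      intro i
      rw [Nat.sub_sub]
      congr 1
      ring
    have hrw : ∀ i ∈ range ((n-k)/k), b * ((i+1)*k * (PF b ((n-k)-(i+1)*k)).card)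
        = b * ((i+1)*k * (PF b (n-(i+1+1)*k)).card) := by
      intro i _
      rw [harg]
    rw [Finset.sum_congr rfl hrw]
    have hS2 : ∑ i ∈ range ((n-k)/k), b * ((i+1+1)*k * (PF b (n-(i+1+1)*k)).card)
        = k * (b * ∑ i ∈ range ((n-k)/k), (PF b (n-(i+1+1)*k)).card)
          + ∑ i ∈ range ((n-k)/k), b * ((i+1)*k * (PF b (n-(i+1+1)*k)).card) := by
      rw [Finset.mul_sum, Finset.mul_sum, ← Finset.sum_add_distrib]
      exact Finset.sum_congr rfl (fun i _ => by ring)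
    rw [hS2, mul_add, mul_add]
    ring

end ColoredAux

open ColoredAux

/-- For `b`-colored partitions, `k · F_k(n) = H_k(n) - H_k(n - k)`. -/
theorem coloredH_sub (b : ℕ) (hb : 0 < b) (n k : ℕ) (hn : 0 < n) (hk : 0 < k) :
    (k * coloredF (fun _ => b) k n : ℤ)
      = (coloredH (fun _ => b) k n : ℤ) - (coloredH (fun _ => b) k (n - k) : ℤ) := by
  have h := key hk hb n
  rw [h]
  push_cast
  ring
end

section
/- (b-colored Euler ODD=DISTINCT theorem) For every nonnegative integer n, the number of b-colored partitions of n in which every part has odd first coordinate equals the number of b-colored partitions of n in which every colored part occurs at most once; that is, h°(n) = h^d(n). -/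
/-- A colored partition in which every part has odd first coordinate. -/
def IsColoredOddPartition (b : ℕ → ℕ) (n : ℕ) (M : Multiset (ℕ × ℕ)) : Prop :=
  IsColoredPartition b n M ∧ ∀ p ∈ M, Odd p.1

/-- A colored partition in which every colored part occurs at most once. -/
def IsColoredDistinctPartition (b : ℕ → ℕ) (n : ℕ) (M : Multiset (ℕ × ℕ)) : Prop :=
  IsColoredPartition b n M ∧ M.Nodup

/-- `h° n`: the number of `b`-colored partitions of `n` with all parts odd. -/
noncomputable def coloredhOdd (b : ℕ → ℕ) (n : ℕ) : ℕ :=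
  Nat.card {M // IsColoredOddPartition b n M}

/-- `h^d n`: the number of `b`-colored partitions of `n` with all colored parts distinct. -/
noncomputable def coloredhDist (b : ℕ → ℕ) (n : ℕ) : ℕ :=
  Nat.card {M // IsColoredDistinctPartition b n M}

/-!
Sorting the parts of a colored partition by color turns it into a tuple of ordinary partitions,
one per color, whose sizes add up to `n`; "all parts odd" and "no colored part repeated" are both
conditions on each color class separately. Euler's theorem gives, for every `m`, a bijection
between partitions of `m` into odd parts and into distinct parts. Applied color by color it
preserves the size of every component, hence is a bijection between the two colored families.
-/

namespace ColoredPartition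

open Multiset

variable {α γ : Type*}

def colorClass [DecidableEq γ] (c : γ) (M : Multiset (α × γ)) : Multiset α :=
  (M.filter (·.2 = c)).map Prod.fst

theorem mem_colorClass [DecidableEq γ] {a : α} {c : γ} {M : Multiset (α × γ)} :
    a ∈ colorClass c M ↔ (a, c) ∈ M := by
  simp [colorClass]

theorem count_colorClass [DecidableEq α] [DecidableEq γ] (a : α) (c : γ)
    (M : Multiset (α × γ)) : (colorClass c M).count a = M.count (a, c) := by
  rw [colorClass, count_map, filter_filter, count_eq_card_filter_eq]
  congr 1
  refine filter_congr fun p _ => ⟨?_, ?_⟩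
  · rintro ⟨rfl, h⟩
    exact Prod.ext rfl h.symm
  · rintro rfl
    exact ⟨rfl, rfl⟩

section ColorSplit

variable {s : Finset γ}

theorem count_sum_map_pair [DecidableEq α] [DecidableEq γ] (v : s → Multiset α) (a : α)
    (c : s) : (∑ d : s, (v d).map (·, d.1)).count (a, c.1) = (v c).count a := by
  have count_summand (d : s) :
      ((v d).map (·, d.1)).count (a, c.1) = if c = d then (v d).count a else 0 := by
    split_ifs with h
    · subst h
      exact count_map_eq_count' _ _ (fun x y h => congrArg Prod.fst h) a
    · refine count_eq_zero.2 fun hmem => h ?_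
      obtain ⟨x, -, hx⟩ := mem_map.1 hmem
      exact Subtype.ext (congrArg Prod.snd hx).symm
  simp only [count_sum', count_summand, Finset.sum_ite_eq, Finset.mem_univ, if_true]

theorem snd_mem_of_mem_sum_map_pair {v : s → Multiset α} {p : α × γ}
    (hp : p ∈ ∑ d : s, (v d).map (·, d.1)) : p.2 ∈ s := by
  obtain ⟨d, -, hd⟩ := mem_sum.1 hp
  obtain ⟨x, -, rfl⟩ := mem_map.1 hd
  exact d.2

variable [DecidableEq α] [DecidableEq γ]

variable (s) in
def colorSplit : {M : Multiset (α × γ) // ∀ p ∈ M, p.2 ∈ s} ≃ (s → Multiset α) where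
  toFun M c := colorClass c.1 M.1
  invFun v := ⟨∑ d : s, (v d).map (·, d.1), fun _ => snd_mem_of_mem_sum_map_pair⟩
  left_inv M := by
    refine Subtype.ext (ext.2 fun ⟨a, c⟩ => ?_)
    by_cases hc : c ∈ s
    · exact (count_sum_map_pair _ a ⟨c, hc⟩).trans (count_colorClass a c M.1)
    · rw [count_eq_zero.2 fun h => hc (snd_mem_of_mem_sum_map_pair h),
        count_eq_zero.2 fun h => hc (M.2 _ h)]
  right_inv v := funext fun c => ext.2 fun a => by
    rw [count_colorClass, count_sum_map_pair]

@[simp]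
theorem colorSplit_apply (M : {M : Multiset (α × γ) // ∀ p ∈ M, p.2 ∈ s}) (c : s) :
    colorSplit s M c = colorClass c.1 M.1 :=
  rfl

theorem forall_mem_colorSplit_iff (M : {M : Multiset (α × γ) // ∀ p ∈ M, p.2 ∈ s})
    (P : α → Prop) : (∀ c, ∀ a ∈ colorSplit s M c, P a) ↔ ∀ p ∈ M.1, P p.1 := by
  simp only [colorSplit_apply, mem_colorClass]
  exact ⟨fun h p hp => h ⟨p.2, M.2 p hp⟩ p.1 hp, fun h c a ha => h _ ha⟩

theorem nodup_colorSplit_iff (M : {M : Multiset (α × γ) // ∀ p ∈ M, p.2 ∈ s}) :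
    (∀ c, (colorSplit s M c).Nodup) ↔ M.1.Nodup := by
  simp only [nodup_iff_count_le_one, colorSplit_apply, count_colorClass]
  refine ⟨fun h p => ?_, fun h c a => h _⟩
  by_cases hp : p ∈ M.1
  · exact h ⟨p.2, M.2 p hp⟩ p.1
  · simp [count_eq_zero.2 hp]

theorem sum_map_fst_eq_sum_colorSplit [AddCommMonoid α]
    (M : {M : Multiset (α × γ) // ∀ p ∈ M, p.2 ∈ s}) :
    (M.1.map Prod.fst).sum = ∑ c, (colorSplit s M c).sum := by
  conv_lhs => rw [← (colorSplit s).symm_apply_apply M]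
  change ((mapAddMonoidHom Prod.fst) (∑ d : s, _)).sum = _
  simp [map_sum, map_map, sum_sum]

def colorSplitSubtypeEquiv [AddCommMonoid α] {Q : Multiset (α × γ) → Prop}
    {R : Multiset α → Prop}
    (hQR : ∀ M, Q M.1 ↔ ∀ c, R (colorSplit s M c)) (n : α) :
    {M : Multiset (α × γ) // (∀ p ∈ M, p.2 ∈ s) ∧ Q M ∧ (M.map Prod.fst).sum = n} ≃
      {v : s → Subtype R // ∑ c, (v c).1.sum = n} :=
  (Equiv.subtypeSubtypeEquivSubtypeInter _ _).symm.trans <|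
    ((colorSplit s).subtypeEquiv (q := fun v => (∀ c, R (v c)) ∧ ∑ c, (v c).sum = n)
      fun M => by rw [hQR, sum_map_fst_eq_sum_colorSplit]).trans <|
    (Equiv.subtypeSubtypeEquivSubtypeInter _ _).symm.trans <|
      Equiv.subtypePiEquivPi.subtypeEquiv (q := fun v : s → Subtype R => ∑ c, (v c).1.sum = n)
        fun _ => Iff.rfl

end ColorSplit

def piSubtypeSumCongr {ι β β' M : Type*} [Fintype ι] [AddCommMonoid M] {w : β → M}
    {w' : β' → M} (e : β ≃ β') (he : ∀ x, w' (e x) = w x) (n : M) :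
    {v : ι → β // ∑ i, w (v i) = n} ≃ {v : ι → β' // ∑ i, w' (v i) = n} :=
  (Equiv.piCongrRight fun _ => e).subtypeEquiv fun v => by simp [he]

abbrev OddPartition : Type :=
  {x : Multiset ℕ // (∀ a ∈ x, 0 < a) ∧ ∀ a ∈ x, ¬Even a}

abbrev DistinctPartition : Type :=
  {x : Multiset ℕ // (∀ a ∈ x, 0 < a) ∧ x.Nodup}

def subtypeSumEquivPartition (S : Multiset ℕ → Prop) (m : ℕ) :
    {x : {x : Multiset ℕ // (∀ a ∈ x, 0 < a) ∧ S x} // x.1.sum = m} ≃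
      {p : m.Partition // S p.parts} where
  toFun x := ⟨⟨x.1.1, x.1.2.1 _, x.2⟩, x.1.2.2⟩
  invFun p := ⟨⟨p.1.parts, fun _ => p.1.parts_pos, p.2⟩, p.1.parts_sum⟩

noncomputable def oddPartitionEquivDistinctPartition : OddPartition ≃ DistinctPartition :=
  Equiv.ofFiberEquiv (f := fun x => x.1.sum) (g := fun x => x.1.sum) fun m =>
    (subtypeSumEquivPartition _ m).trans <|
      (Fintype.equivOfCardEq (by
        rw [Fintype.card_subtype, Fintype.card_subtype]
        exact Nat.Partition.card_odds_eq_card_distincts m)).trans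
      (subtypeSumEquivPartition _ m).symm

theorem sum_oddPartitionEquivDistinctPartition (x : OddPartition) :
    (oddPartitionEquivDistinctPartition x).1.sum = x.1.sum :=
  Equiv.ofFiberEquiv_map (g := fun y : DistinctPartition => y.1.sum) _ x

theorem isColoredOddPartition_const_iff {b n : ℕ} {M : Multiset (ℕ × ℕ)} :
    IsColoredOddPartition (fun _ => b) n M ↔ (∀ p ∈ M, p.2 ∈ Finset.Icc 1 b) ∧
      ((∀ p ∈ M, 0 < p.1) ∧ ∀ p ∈ M, ¬Even p.1) ∧ (M.map Prod.fst).sum = n := by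
  simp only [IsColoredOddPartition, IsColoredPartition, Finset.mem_Icc, Nat.not_even_iff_odd,
    forall_and]
  tauto

theorem isColoredDistinctPartition_const_iff {b n : ℕ} {M : Multiset (ℕ × ℕ)} :
    IsColoredDistinctPartition (fun _ => b) n M ↔ (∀ p ∈ M, p.2 ∈ Finset.Icc 1 b) ∧
      ((∀ p ∈ M, 0 < p.1) ∧ M.Nodup) ∧ (M.map Prod.fst).sum = n := by
  simp only [IsColoredDistinctPartition, IsColoredPartition, Finset.mem_Icc, forall_and]
  tauto

def coloredOddEquiv (b n : ℕ) :
    {M // IsColoredOddPartition (fun _ => b) n M} ≃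
      {v : Finset.Icc 1 b → OddPartition // ∑ c, (v c).1.sum = n} :=
  (Equiv.subtypeEquivRight fun _ => isColoredOddPartition_const_iff).trans <|
    colorSplitSubtypeEquiv (fun M => by
      rw [forall_and, forall_mem_colorSplit_iff, forall_mem_colorSplit_iff (P := (¬Even ·))]) n

def coloredDistinctEquiv (b n : ℕ) :
    {M // IsColoredDistinctPartition (fun _ => b) n M} ≃
      {v : Finset.Icc 1 b → DistinctPartition // ∑ c, (v c).1.sum = n} :=
  (Equiv.subtypeEquivRight fun _ => isColoredDistinctPartition_const_iff).trans <|
    colorSplitSubtypeEquiv (fun M => by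
      rw [forall_and, forall_mem_colorSplit_iff, nodup_colorSplit_iff]) n

end ColoredPartition

open ColoredPartition in
theorem coloredhOdd_eq_coloredhDist_general (b : ℕ) (n : ℕ) :
    coloredhOdd (fun _ => b) n = coloredhDist (fun _ => b) n :=
  Nat.card_congr <| (coloredOddEquiv b n).trans <|
    (piSubtypeSumCongr (w := fun x => x.1.sum) (w' := fun x => x.1.sum)
      oddPartitionEquivDistinctPartition sum_oddPartitionEquivDistinctPartition n).trans
    (coloredDistinctEquiv b n).symm

/-- `b`-colored ODD = DISTINCT theorem of Euler. -/
theorem coloredhOdd_eq_coloredhDist (b : ℕ) (hb : 0 < b) (n : ℕ) :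
    coloredhOdd (fun _ => b) n = coloredhDist (fun _ => b) n :=
  coloredhOdd_eq_coloredhDist_general b n
end

section
/- For every positive integer n and every positive integer k, in the set of partitions where each part j comes in j colors, G_k(n) = Σ_{j=1}^{⌊n/k⌋} j · h(n − jk). -/
lemma mem_bound {n : ℕ} {M : Multiset (ℕ × ℕ)} (h : IsColoredPartition (fun j => j) n M)
    {q : ℕ × ℕ} (hq : q ∈ M) : 1 ≤ q.1 ∧ q.1 ≤ n ∧ 1 ≤ q.2 ∧ q.2 ≤ n := by
  obtain ⟨h1, h2⟩ := h
  obtain ⟨hp1, hp2, hp3⟩ := h1 q hq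
  have hle : q.1 ≤ n := by
    rw [← h2]
    exact Multiset.single_le_sum (fun x _ => Nat.zero_le x) _ (Multiset.mem_map_of_mem _ hq)
  exact ⟨hp1, hle, hp2, le_trans hp3 hle⟩

lemma card_le {n : ℕ} {M : Multiset (ℕ × ℕ)} (h : IsColoredPartition (fun j => j) n M) :
    Multiset.card M ≤ n := by
  obtain ⟨h1, h2⟩ := h
  calc Multiset.card M = Multiset.card (M.map Prod.fst) • 1 := by simp
    _ ≤ (M.map Prod.fst).sum := Multiset.card_nsmul_le_sum (by
        intro x hx
        obtain ⟨p, hp, rfl⟩ := Multiset.mem_map.mp hx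
        exact (h1 p hp).1)
    _ = n := h2

lemma finite_part (n : ℕ) : {M | IsColoredPartition (fun j => j) n M}.Finite := by
  classical
  have : {M | IsColoredPartition (fun j => j) n M} ⊆
      {M | M ≤ n • ((Finset.Icc 1 n ×ˢ Finset.Icc 1 n).val)} := by
    intro M hM
    simp only [Set.mem_setOf_eq] at hM ⊢
    rw [Multiset.le_iff_count]
    intro q
    by_cases hq : q ∈ M
    · obtain ⟨a1, a2, a3, a4⟩ := mem_bound hM hq
      have hqU : q ∈ Finset.Icc 1 n ×ˢ Finset.Icc 1 n := by
        simp [Finset.mem_product, Finset.mem_Icc]; omega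
      rw [Multiset.count_nsmul,
        Multiset.count_eq_one_of_mem (Finset.Icc 1 n ×ˢ Finset.Icc 1 n).nodup hqU]
      calc M.count q ≤ Multiset.card M := Multiset.count_le_card _ _
        _ ≤ n := card_le hM
        _ = n * 1 := (mul_one n).symm
    · simp [Multiset.count_eq_zero_of_notMem hq]
  refine Set.Finite.subset (Set.Finite.ofFinset
    ((n • ((Finset.Icc 1 n ×ˢ Finset.Icc 1 n).val)).powerset.toFinset) ?_) this
  intro M
  simp [Multiset.mem_powerset]

lemma coloredh_eq_s16 (m : ℕ) : coloredh (fun j => j) m = (finite_part m).toFinset.card := by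
  have : Nat.card {M // IsColoredPartition (fun j => j) m M}
      = Nat.card {M | IsColoredPartition (fun j => j) m M} := rfl
  rw [coloredh, this, Nat.card_coe_set_eq, Set.ncard_eq_toFinset_card _ (finite_part m)]

lemma card_filter_eq (n k j c : ℕ) (hk : 0 < k) (hj : 1 ≤ j) (hc : 1 ≤ c) (hcj : c ≤ j)
    (hjk : j * k ≤ n) :
    ((finite_part n).toFinset.filter (fun M => k ≤ M.count (j, c))).card
      = (finite_part (n - j * k)).toFinset.card := by
  classical
  set R : Multiset (ℕ × ℕ) := Multiset.replicate k (j, c) with hR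
  have hRle : ∀ M : Multiset (ℕ × ℕ), k ≤ M.count (j, c) → R ≤ M := by
    intro M hcount
    rw [Multiset.le_iff_count]
    intro q
    rw [hR, Multiset.count_replicate]
    split
    · next h => subst h; exact hcount
    · exact Nat.zero_le _
  have hsumR : (R.map Prod.fst).sum = j * k := by
    rw [hR, Multiset.map_replicate, Multiset.sum_replicate, smul_eq_mul, mul_comm]
  apply Finset.card_bij' (fun M _ => M - R) (fun M _ => M + R)
  · intro M hM
    simp only [Finset.mem_filter, Set.Finite.mem_toFinset, Set.mem_setOf_eq] at hM ⊢
    obtain ⟨⟨h1, h2⟩, hcount⟩ := hM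
    have hle := hRle M hcount
    constructor
    · intro p hp
      exact h1 p (Multiset.mem_of_le (Multiset.sub_le_self _ _) hp)
    · have hdecomp : (M - R) + R = M := tsub_add_cancel_of_le hle
      have : ((M - R).map Prod.fst).sum + (R.map Prod.fst).sum = n := by
        rw [← Multiset.sum_add, ← Multiset.map_add, hdecomp, h2]
      rw [hsumR] at this
      omega
  · intro M hM
    simp only [Finset.mem_filter, Set.Finite.mem_toFinset, Set.mem_setOf_eq] at hM ⊢
    obtain ⟨h1, h2⟩ := hM
    refine ⟨⟨?_, ?_⟩, ?_⟩
    · intro p hp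
      rcases Multiset.mem_add.mp hp with h | h
      · exact h1 p h
      · rw [hR, Multiset.mem_replicate] at h
        rw [h.2]
        exact ⟨hj, hc, hcj⟩
    · rw [Multiset.map_add, Multiset.sum_add, h2, hsumR]
      omega
    · rw [Multiset.count_add, hR, Multiset.count_replicate, if_pos rfl]
      omega
  · intro M hM
    simp only [Finset.mem_filter] at hM
    exact tsub_add_cancel_of_le (hRle M hM.2)
  · intro M _
    exact add_tsub_cancel_right M R

lemma card_filter_zero (n k j c : ℕ) (hk : 0 < k) (h : n < j * k ∨ j < c ∨ c = 0) :
    ((finite_part n).toFinset.filter (fun M => k ≤ M.count (j, c))).card = 0 := by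
  classical
  rw [Finset.card_eq_zero, Finset.filter_eq_empty_iff]
  intro M hM
  simp only [Set.Finite.mem_toFinset, Set.mem_setOf_eq] at hM
  intro hcount
  have hmem : (j, c) ∈ M := Multiset.count_pos.mp (lt_of_lt_of_le hk hcount)
  obtain ⟨hp1, hp2, hp3⟩ := hM.1 _ hmem
  have hRle : Multiset.replicate k (j, c) ≤ M := by
    rw [Multiset.le_iff_count]
    intro q
    rw [Multiset.count_replicate]
    split
    · next hq => subst hq; exact hcount
    · exact Nat.zero_le _
  have hjkn : k * j ≤ n := by
    obtain ⟨u, rfl⟩ := Multiset.le_iff_exists_add.mp hRle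
    have := hM.2
    simp only [Multiset.map_add, Multiset.sum_add, Multiset.map_replicate,
      Multiset.sum_replicate, smul_eq_mul] at this
    omega
  have hcj : c ≤ j := hp3
  rw [mul_comm] at hjkn
  omega

/-- For partitions where each part `j` comes in `j` colors,
`G_k(n) = Σ_{j=1}^{⌊n/k⌋} j · h(n - jk)`. -/
theorem coloredG_eq_sum_kColors (n k : ℕ) (hn : 0 < n) (hk : 0 < k) :
    coloredG (fun j => j) k n
      = ∑ j ∈ Finset.Icc 1 (n / k), j * coloredh (fun j => j) (n - j * k) := by
  classical
  have hfin := finite_part n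
  rw [coloredG, ← Set.Finite.coe_toFinset hfin, finsum_mem_coe_finset]
  have step1 : ∀ M ∈ hfin.toFinset,
      (M.toFinset.filter fun p => k ≤ M.count p).card
        = ∑ p ∈ Finset.Icc 1 n ×ˢ Finset.Icc 1 n, if k ≤ M.count p then 1 else 0 := by
    intro M hM
    have hflt : (M.toFinset.filter fun p => k ≤ M.count p)
        = (Finset.Icc 1 n ×ˢ Finset.Icc 1 n).filter fun p => k ≤ M.count p := by
      ext p
      simp only [Finset.mem_filter, Multiset.mem_toFinset]
      constructor
      · rintro ⟨hp, hcount⟩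
        obtain ⟨a1, a2, a3, a4⟩ := mem_bound (Set.Finite.mem_toFinset hfin |>.mp hM) hp
        refine ⟨?_, hcount⟩
        simp only [Finset.mem_product, Finset.mem_Icc]
        omega
      · rintro ⟨-, hcount⟩
        exact ⟨Multiset.count_pos.mp (lt_of_lt_of_le hk hcount), hcount⟩
    rw [hflt, Finset.card_filter]
  rw [Finset.sum_congr rfl step1, Finset.sum_comm]
  have step2 : ∀ p ∈ Finset.Icc 1 n ×ˢ Finset.Icc 1 n,
      (∑ M ∈ hfin.toFinset, if k ≤ M.count p then 1 else 0)
        = if p.2 ≤ p.1 ∧ p.1 * k ≤ n then coloredh (fun j => j) (n - p.1 * k) else 0 := by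
    intro p hp
    obtain ⟨j, c⟩ := p
    simp only [Finset.mem_product, Finset.mem_Icc] at hp
    rw [← Finset.card_filter]
    by_cases hcase : c ≤ j ∧ j * k ≤ n
    · rw [if_pos hcase, coloredh_eq_s16,
        ← card_filter_eq n k j c hk (by omega) (by omega) hcase.1 hcase.2]
    · rw [if_neg hcase, card_filter_zero n k j c hk (by omega)]
  rw [Finset.sum_congr rfl step2, Finset.sum_product]
  have step3 : ∀ j ∈ Finset.Icc 1 n,
      (∑ c ∈ Finset.Icc 1 n,
          if (j, c).2 ≤ (j, c).1 ∧ (j, c).1 * k ≤ n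
          then coloredh (fun j => j) (n - (j, c).1 * k) else 0)
        = if j * k ≤ n then j * coloredh (fun j => j) (n - j * k) else 0 := by
    intro j hj
    simp only [Finset.mem_Icc] at hj
    by_cases hjk : j * k ≤ n
    · rw [if_pos hjk]
      have heq : ∀ c, (if (j, c).2 ≤ (j, c).1 ∧ (j, c).1 * k ≤ n
            then coloredh (fun j => j) (n - (j, c).1 * k) else 0)
          = if c ≤ j then coloredh (fun j => j) (n - j * k) else 0 := by
        intro c
        by_cases h : c ≤ j <;> simp [h, hjk]
      simp_rw [heq]
      rw [← Finset.sum_filter]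
      have : Finset.filter (fun c => c ≤ j) (Finset.Icc 1 n) = Finset.Icc 1 j := by
        ext c
        simp only [Finset.mem_filter, Finset.mem_Icc]
        omega
      rw [this, Finset.sum_const, Nat.card_Icc]
      simp [smul_eq_mul]
    · rw [if_neg hjk]
      apply Finset.sum_eq_zero
      intro c _
      rw [if_neg]
      simp only [not_and]
      intro _
      exact hjk
  rw [Finset.sum_congr rfl step3, ← Finset.sum_filter]
  apply Finset.sum_congr
  · ext j
    simp only [Finset.mem_filter, Finset.mem_Icc]
    constructor
    · rintro ⟨⟨h1, h2⟩, h3⟩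
      exact ⟨h1, (Nat.le_div_iff_mul_le hk).mpr h3⟩
    · rintro ⟨h1, h2⟩
      have h3 := (Nat.le_div_iff_mul_le hk).mp h2
      have h4 : n / k ≤ n := Nat.div_le_self n k
      exact ⟨⟨h1, by omega⟩, h3⟩
  · intro x _
    rfl
end

section
/- For every positive integer n and every positive integer k, for (r,s)-colored overpartitions, F_k(n) = G_k(n): the total number of ordinary parts with first coordinate k, counted with multiplicity, over all (r,s)-colored overpartitions of n equals the total number of distinct colored ordinary parts occurring with multiplicity at least k, summed over all (r,s)-colored overpartitions of n. -/
/-- An `(r,s)`-colored overpartition of `n`: a pair `(μ, ν)` where `μ` is a multiset of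
pairs `(j, c)` with `j` a positive integer and `c ∈ {1, …, r}` (the ordinary parts), `ν` is
a multiset of pairs `(j, c)` with `j` a positive integer and `c ∈ {1, …, s}` in which every
pair occurs at most once (the overlined parts), and the sum of all first coordinates of `μ`
and `ν`, counted with multiplicity, is `n`. -/
def IsColoredOverpartition (r s n : ℕ) (P : Multiset (ℕ × ℕ) × Multiset (ℕ × ℕ)) : Prop :=
  (∀ p ∈ P.1, 0 < p.1 ∧ 1 ≤ p.2 ∧ p.2 ≤ r) ∧
  (∀ p ∈ P.2, 0 < p.1 ∧ 1 ≤ p.2 ∧ p.2 ≤ s) ∧ P.2.Nodup ∧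
  (P.1.map Prod.fst).sum + (P.2.map Prod.fst).sum = n

/-- `F k n`: the total number of ordinary parts with first coordinate `k`, counted with
multiplicity, over all `(r,s)`-colored overpartitions of `n`. -/
noncomputable def overF (r s k n : ℕ) : ℕ :=
  ∑ᶠ P ∈ {P | IsColoredOverpartition r s n P},
    (Multiset.filter (fun p => p.1 = k) P.1).card

/-- `G k n`: the total number of distinct colored ordinary parts occurring (in `μ`) with
multiplicity at least `k`, summed over all `(r,s)`-colored overpartitions of `n`. -/
noncomputable def overG (r s k n : ℕ) : ℕ :=
  ∑ᶠ P ∈ {P | IsColoredOverpartition r s n P},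
    (P.1.toFinset.filter fun p => k ≤ P.1.count p).card


/-- The elementary move: remove `i` copies of `(j,c)` and add `j` copies of `(i,c)`. -/
def colMove (μ : Multiset (ℕ × ℕ)) (i j c : ℕ) : Multiset (ℕ × ℕ) :=
  μ - Multiset.replicate i (j, c) + Multiset.replicate j (i, c)

lemma colMove_colMove {μ : Multiset (ℕ × ℕ)} {i j c : ℕ} (h : i ≤ μ.count (j, c)) :
    colMove (colMove μ i j c) j i c = μ := by
  unfold colMove
  rw [add_tsub_cancel_right, tsub_add_cancel_of_le]
  exact Multiset.le_count_iff_replicate_le.mp h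

lemma le_count_colMove {μ : Multiset (ℕ × ℕ)} {i j c : ℕ} (h : i ≤ μ.count (j, c)) :
    j ≤ (colMove μ i j c).count (i, c) := by
  unfold colMove
  rw [Multiset.count_add, Multiset.count_sub, Multiset.count_replicate,
    Multiset.count_replicate]
  by_cases hij : i = j
  · subst hij; simp only [if_pos rfl]; omega
  · have h1 : ¬ (((i, c) : ℕ × ℕ) = (j, c)) := by simp [hij]
    simp [h1]

lemma sum_map_colMove {μ : Multiset (ℕ × ℕ)} {i j c : ℕ} (h : i ≤ μ.count (j, c)) :
    ((colMove μ i j c).map Prod.fst).sum = (μ.map Prod.fst).sum := by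
  have hle : Multiset.replicate i ((j, c) : ℕ × ℕ) ≤ μ :=
    Multiset.le_count_iff_replicate_le.mp h
  have h1 : (μ.map Prod.fst).sum
      = ((μ - Multiset.replicate i ((j, c) : ℕ × ℕ)).map Prod.fst).sum + i * j := by
    conv_lhs => rw [← tsub_add_cancel_of_le hle]
    rw [Multiset.map_add, Multiset.sum_add, Multiset.map_replicate, Multiset.sum_replicate]
    simp [mul_comm]
  rw [colMove, Multiset.map_add, Multiset.sum_add, Multiset.map_replicate,
    Multiset.sum_replicate, h1]
  simp [mul_comm]

lemma colMove_isPartition {r s n : ℕ} {μ ν : Multiset (ℕ × ℕ)} {i j c : ℕ}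
    (hP : IsColoredOverpartition r s n (μ, ν)) (hi : 0 < i) (hc1 : 1 ≤ c) (hc2 : c ≤ r)
    (h : i ≤ μ.count (j, c)) :
    IsColoredOverpartition r s n (colMove μ i j c, ν) := by
  obtain ⟨h1, h2, h3, h4⟩ := hP
  refine ⟨?_, h2, h3, ?_⟩
  · intro p hp
    rcases Multiset.mem_add.mp hp with hp | hp
    · exact h1 p (Multiset.mem_of_le (tsub_le_self) hp)
    · rw [Multiset.eq_of_mem_replicate hp]; exact ⟨hi, hc1, hc2⟩
  · rw [sum_map_colMove h]; exact h4

lemma card_le_sum_fst {μ : Multiset (ℕ × ℕ)} (h : ∀ p ∈ μ, 0 < p.1) :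
    Multiset.card μ ≤ (μ.map Prod.fst).sum := by
  have := Multiset.card_nsmul_le_sum (s := μ.map Prod.fst) (a := 1)
    (by intro x hx; obtain ⟨p, hp, rfl⟩ := Multiset.mem_map.mp hx; exact h p hp)
  simpa using this

lemma mem_le_sum_fst {μ : Multiset (ℕ × ℕ)} {p : ℕ × ℕ} (hp : p ∈ μ) :
    p.1 ≤ (μ.map Prod.fst).sum := by
  obtain ⟨t, ht⟩ := Multiset.exists_cons_of_mem (Multiset.mem_map_of_mem Prod.fst hp)
  rw [ht]; simp

lemma colored_finite (r s n : ℕ) :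
    {P : Multiset (ℕ × ℕ) × Multiset (ℕ × ℕ) | IsColoredOverpartition r s n P}.Finite := by
  set F : Finset (ℕ × ℕ) := Finset.Icc 1 n ×ˢ Finset.Icc 1 (max r s) with hF
  set M : Multiset (ℕ × ℕ) := n • F.val with hM
  have key : ∀ (μ : Multiset (ℕ × ℕ)),
      (∀ p ∈ μ, 0 < p.1 ∧ 1 ≤ p.2 ∧ p.2 ≤ max r s) → (μ.map Prod.fst).sum ≤ n → μ ≤ M := by
    intro μ hparts hsum
    rw [Multiset.le_iff_count]
    intro a
    by_cases ha : a ∈ μ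
    · obtain ⟨ha1, ha2, ha3⟩ := hparts a ha
      have hmemF : a ∈ F := by
        rw [hF, Finset.mem_product, Finset.mem_Icc, Finset.mem_Icc]
        exact ⟨⟨ha1, le_trans (mem_le_sum_fst ha) hsum⟩, ha2, ha3⟩
      have hcount : M.count a = n := by
        rw [hM, Multiset.count_nsmul, Multiset.count_eq_one_of_mem F.nodup hmemF, mul_one]
      rw [hcount]
      calc μ.count a ≤ Multiset.card μ := Multiset.count_le_card a μ
        _ ≤ (μ.map Prod.fst).sum := card_le_sum_fst (fun p hp => (hparts p hp).1)
        _ ≤ n := hsum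
    · simp [Multiset.count_eq_zero_of_notMem ha]
  apply Set.Finite.subset (Set.Finite.prod (M.powerset.toFinset.finite_toSet)
    (M.powerset.toFinset.finite_toSet))
  rintro ⟨μ, ν⟩ ⟨h1, h2, hnd, hsum⟩
  have hsum : (μ.map Prod.fst).sum + (ν.map Prod.fst).sum = n := hsum
  constructor <;> simp only [Multiset.mem_toFinset, Multiset.mem_powerset, Finset.coe_sort_coe,
    Finset.mem_coe]
  · exact key μ (fun p hp => ⟨(h1 p hp).1, (h1 p hp).2.1,
      le_trans (h1 p hp).2.2 (le_max_left r s)⟩) (by omega)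
  · exact key ν (fun p hp => ⟨(h2 p hp).1, (h2 p hp).2.1,
      le_trans (h2 p hp).2.2 (le_max_right r s)⟩) (by omega)

/-- Stanley–Elder–Fine theorem for the ordinary parts of `(r,s)`-colored overpartitions. -/
theorem overF_eq_overG (r s : ℕ) (hr : 0 < r) (hs : 0 < s) (n k : ℕ)
    (hn : 0 < n) (hk : 0 < k) :
    overF r s k n = overG r s k n := by
  have hfin := colored_finite r s n
  rw [overF, overG, finsum_mem_eq_finite_toFinset_sum _ hfin,
    finsum_mem_eq_finite_toFinset_sum _ hfin]
  have hL : ∀ P : Multiset (ℕ × ℕ) × Multiset (ℕ × ℕ),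
      (Multiset.filter (fun p => p.1 = k) P.1).card
      = ((P.1.toFinset.filter (fun p => p.1 = k)).sigma
          (fun p => Finset.Icc 1 (P.1.count p))).card := by
    intro P
    rw [Finset.card_sigma, ← Multiset.toFinset_sum_count_eq, Multiset.toFinset_filter]
    apply Finset.sum_congr rfl
    intro p hp
    rw [Nat.card_Icc, Multiset.count_filter, if_pos (Finset.mem_filter.mp hp).2]
    omega
  simp_rw [hL]
  rw [← Finset.card_sigma, ← Finset.card_sigma]
  refine Finset.card_bij
    (fun x _ => (⟨(colMove x.1.1 x.2.2 k x.2.1.2, x.1.2), (x.2.2, x.2.1.2)⟩ :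
      Σ _ : Multiset (ℕ × ℕ) × Multiset (ℕ × ℕ), ℕ × ℕ)) ?_ ?_ ?_
  · rintro ⟨⟨μ, ν⟩, ⟨⟨pk, c⟩, i⟩⟩ hx
    simp only [Finset.mem_sigma, Set.Finite.mem_toFinset, Finset.mem_filter,
      Multiset.mem_toFinset, Finset.mem_Icc, Set.mem_setOf_eq] at hx ⊢
    obtain ⟨hP, ⟨⟨hpmem, hpk⟩, hi1, hi2⟩⟩ := hx
    subst hpk
    obtain ⟨_, hc1, hc2⟩ := hP.1 _ hpmem
    refine ⟨colMove_isPartition hP hi1 hc1 hc2 hi2, ?_, le_count_colMove hi2⟩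
    exact Multiset.mem_add.mpr (Or.inr (Multiset.mem_replicate.mpr ⟨hk.ne', rfl⟩))
  · rintro ⟨⟨μ, ν⟩, ⟨⟨pk, c⟩, i⟩⟩ hx ⟨⟨μ', ν'⟩, ⟨⟨pk', c'⟩, i'⟩⟩ hx' heq
    simp only [Finset.mem_sigma, Set.Finite.mem_toFinset, Finset.mem_filter,
      Multiset.mem_toFinset, Finset.mem_Icc, Set.mem_setOf_eq] at hx hx'
    obtain ⟨hP, ⟨⟨hpmem, hpk⟩, hi1, hi2⟩⟩ := hx
    obtain ⟨hP', ⟨⟨hpmem', hpk'⟩, hi1', hi2'⟩⟩ := hx'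
    subst hpk; subst hpk'
    rw [Sigma.mk.inj_iff] at heq
    obtain ⟨h1, h2⟩ := heq
    rw [heq_iff_eq, Prod.mk.injEq] at h2
    obtain ⟨rfl, rfl⟩ := h2
    rw [Prod.mk.injEq] at h1
    obtain ⟨hμ, rfl⟩ := h1
    have : μ = μ' := by
      have e1 := colMove_colMove hi2
      have e2 := colMove_colMove hi2'
      rw [← e1, ← e2, hμ]
    subst this
    rfl
  · rintro ⟨⟨μ, ν⟩, ⟨j, c⟩⟩ hb
    simp only [Finset.mem_sigma, Set.Finite.mem_toFinset, Finset.mem_filter,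
      Multiset.mem_toFinset, Set.mem_setOf_eq] at hb
    obtain ⟨hP, hpmem, hcount⟩ := hb
    obtain ⟨hj, hc1, hc2⟩ := hP.1 _ hpmem
    refine ⟨⟨(colMove μ k j c, ν), (⟨(k, c), j⟩ : (_ : ℕ × ℕ) × ℕ)⟩, ?_, ?_⟩
    · simp only [Finset.mem_sigma, Set.Finite.mem_toFinset, Finset.mem_filter,
        Multiset.mem_toFinset, Finset.mem_Icc, Set.mem_setOf_eq]
      refine ⟨colMove_isPartition hP hk hc1 hc2 hcount, ⟨?_, trivial⟩, hj,
        le_count_colMove hcount⟩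
      exact Multiset.mem_add.mpr (Or.inr (Multiset.mem_replicate.mpr ⟨hj.ne', rfl⟩))
    · show (⟨(colMove (colMove μ k j c) j k c, ν), (j, c)⟩ :
        Σ _ : Multiset (ℕ × ℕ) × Multiset (ℕ × ℕ), ℕ × ℕ) = ⟨(μ, ν), (j, c)⟩
      rw [colMove_colMove hcount]
end
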